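/- Let fⱼ : [3, ∞) → ℝ be differentiable functions and ψⱼ : [3,∞) → ℝ nonnegative measurable, satisfying |fⱼ'(t)| ≤ (1/(t·log t))·√(fⱼ(t))·ψⱼ(t) with fⱼ ≥ 0, and suppose ∫₃^∞ ((log t)^{n−1}/t)·ψⱼ(t)² dt ≤ 4εⱼ² for some εⱼ ≥ 0, where n ≥ 1. Then for all 3 ≤ a ≤ b: √(fⱼ(b)) − √(fⱼ(a)) ≤ (2/√n)·(log a)^{−n/2}·(2εⱼ). (Gronwall-type estimate (3.7) from the proof of Theorem 3.3.) -/

import Mathlib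

/-!
On `[a, b]` we have `(√f)' = f' / (2√f) ≤ u / 2` with `u = ψ / (t log t)`, and
`u² = A·B` for the weights `A = (log t)^(n-1)/t · ψ²` and `B = 1/(t (log t)^(n+1))`. Hence
`√f(b) - √f(a) ≤ ½ ∫ u ≤ ½ (∫ A)^(1/2) (∫ B)^(1/2)`, where `∫ A ≤ 4ε²` and
`∫ₐᵇ B = 1/(n (log a)^n) - 1/(n (log b)^n)`. The derivative of `√f` may not exist where
`f = 0`, so we differentiate `√(f + δ²)` instead and let `δ → 0`. Cauchy–Schwarz is replaced by
the pointwise bound `2u ≤ cA + B/c`, integrated and then optimised over `c > 0`; this needs no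
measurability of `ψ`.
-/

open MeasureTheory Set Real

lemma le_two_mul_sqrt_mul_of_forall_le_mul_add_div {X Y z : ℝ} (hX : 0 ≤ X) (hY : 0 ≤ Y)
    (h : ∀ c > 0, z ≤ c * X + Y / c) : z ≤ 2 * √(X * Y) := by
  by_contra! hz
  have hs := Real.sq_sqrt (mul_nonneg hX hY)
  have hs0 := Real.sqrt_nonneg (X * Y)
  have hz0 : 0 < z := by linarith
  rcases hX.eq_or_lt with rfl | hX
  · have := h ((Y + 1) / z) (by positivity)
    rw [mul_zero, zero_add, div_div_eq_mul_div, le_div_iff₀ (by positivity)] at this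
    nlinarith
  · have := h (z / (2 * X)) (by positivity)
    have h1 : z / (2 * X) * X = z / 2 := by field_simp
    have h2 : Y / (z / (2 * X)) * z = 2 * (X * Y) := by field_simp
    nlinarith

lemma two_mul_le_mul_add_div {u p q c : ℝ} (hp : 0 ≤ p) (hq : 0 ≤ q) (hc : 0 < c)
    (hu : u ^ 2 ≤ p * q) : 2 * u ≤ c * p + q / c := by
  obtain ⟨r, hr, rfl⟩ : ∃ r, 0 ≤ r ∧ q = c * r := ⟨q / c, by positivity, by field_simp⟩
  rw [mul_div_cancel_left₀ r hc.ne']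
  nlinarith [sq_nonneg (c * p - r), mul_nonneg hc.le hp]

lemma sqrt_sub_sqrt_le_integral {f f' w : ℝ → ℝ} {a b : ℝ} (hab : a ≤ b)
    (hf : ∀ t ∈ Icc a b, 0 ≤ f t) (hderiv : ∀ t ∈ Icc a b, HasDerivAt f (f' t) t)
    (hw : ∀ t ∈ Icc a b, 0 ≤ w t) (hbound : ∀ t ∈ Icc a b, f' t ≤ 2 * w t * √(f t))
    (hint : IntegrableOn w (Icc a b)) :
    √(f b) - √(f a) ≤ ∫ t in a..b, w t := by
  refine le_of_forall_pos_le_add fun δ hδ => ?_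
  have hpos : ∀ t ∈ Icc a b, 0 < f t + δ ^ 2 := fun t ht => by have := hf t ht; positivity
  have hreg : ∀ t ∈ Icc a b,
      HasDerivAt (fun t => √(f t + δ ^ 2)) (f' t / (2 * √(f t + δ ^ 2))) t := fun t ht =>
    ((hderiv t ht).add_const _).sqrt (hpos t ht).ne'
  have hFTC : √(f b + δ ^ 2) - √(f a + δ ^ 2) ≤ ∫ t in a..b, w t := by
    refine intervalIntegral.sub_le_integral_of_hasDeriv_right_of_le hab
      (fun t ht => (hreg t ht).continuousAt.continuousWithinAt)
      (fun t ht => (hreg t (Ioo_subset_Icc_self ht)).hasDerivWithinAt) hint fun t ht => ?_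
    have ht := Ioo_subset_Icc_self ht
    have hsqrt : √(f t) ≤ √(f t + δ ^ 2) := Real.sqrt_le_sqrt (by nlinarith)
    have hs := Real.sqrt_pos.2 (hpos t ht)
    rw [div_le_iff₀ (by positivity)]
    nlinarith [hbound t ht, mul_le_mul_of_nonneg_left hsqrt (hw t ht)]
  have hb : √(f b) ≤ √(f b + δ ^ 2) := Real.sqrt_le_sqrt (by nlinarith)
  have ha : √(f a + δ ^ 2) ≤ √(f a) + δ := by
    rw [Real.sqrt_le_left (by positivity)]
    nlinarith [Real.sq_sqrt (hf a ⟨le_rfl, hab⟩), Real.sqrt_nonneg (f a)]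
  linarith

theorem sqrt_sub_sqrt_le_sqrt_integral_mul_sqrt_integral {f f' u A B : ℝ → ℝ} {a b : ℝ}
    (hab : a ≤ b) (hf : ∀ t ∈ Icc a b, 0 ≤ f t) (hderiv : ∀ t ∈ Icc a b, HasDerivAt f (f' t) t)
    (hbound : ∀ t ∈ Icc a b, |f' t| ≤ u t * √(f t)) (hu : ∀ t ∈ Icc a b, u t ^ 2 ≤ A t * B t)
    (hA : ∀ t ∈ Icc a b, 0 ≤ A t) (hB : ∀ t ∈ Icc a b, 0 ≤ B t)
    (hAint : IntegrableOn A (Icc a b)) (hBint : IntegrableOn B (Icc a b)) :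
    √(f b) - √(f a) ≤ √(∫ t in a..b, A t) * √(∫ t in a..b, B t) / 2 := by
  have hAi := (intervalIntegrable_iff_integrableOn_Icc_of_le hab).2 hAint
  have hBi := (intervalIntegrable_iff_integrableOn_Icc_of_le hab).2 hBint
  have key : ∀ c > 0,
      √(f b) - √(f a) ≤ c * ((∫ t in a..b, A t) / 4) + (∫ t in a..b, B t) / 4 / c := by
    intro c hc
    calc √(f b) - √(f a) ≤ ∫ t in a..b, (c * A t + B t / c) / 4 := by
          refine sqrt_sub_sqrt_le_integral hab hf hderiv (fun t ht => ?_) (fun t ht => ?_)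
            (((hAint.const_mul c).add (hBint.div_const c)).div_const 4)
          · have := hA t ht
            have := hB t ht
            positivity
          · calc f' t ≤ |f' t| := le_abs_self _
              _ ≤ u t * √(f t) := hbound t ht
              _ ≤ 2 * ((c * A t + B t / c) / 4) * √(f t) := by
                gcongr
                linarith [two_mul_le_mul_add_div (hA t ht) (hB t ht) hc (hu t ht)]
      _ = c * ((∫ t in a..b, A t) / 4) + (∫ t in a..b, B t) / 4 / c := by
          rw [intervalIntegral.integral_div, intervalIntegral.integral_add (hAi.const_mul c)
            (hBi.div_const c), intervalIntegral.integral_const_mul, intervalIntegral.integral_div]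
          ring
  have hA0 := intervalIntegral.integral_nonneg (μ := volume) hab hA
  have hB0 := intervalIntegral.integral_nonneg (μ := volume) hab hB
  have hsqrt : ∀ X Y : ℝ, 0 ≤ X → 2 * √(X / 4 * (Y / 4)) = √X * √Y / 2 := fun X Y hX => by
    rw [Real.sqrt_mul (by positivity), Real.sqrt_div' _ (by norm_num),
      Real.sqrt_div' _ (by norm_num), show (4 : ℝ) = 2 ^ 2 by norm_num, Real.sqrt_sq (by norm_num)]
    ring
  exact (le_two_mul_sqrt_mul_of_forall_le_mul_add_div (by positivity) (by positivity) key).trans_eq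
    (hsqrt _ _ hA0)

lemma intervalIntegral_le_setIntegral_Ici {g : ℝ → ℝ} {c a b : ℝ} (hca : c ≤ a) (hab : a ≤ b)
    (hg : IntegrableOn g (Ici c)) (hg0 : ∀ t ∈ Ici c, 0 ≤ g t) :
    ∫ t in a..b, g t ≤ ∫ t in Ici c, g t := by
  rw [intervalIntegral.integral_of_le hab]
  exact setIntegral_mono_set hg ((ae_restrict_mem measurableSet_Ici).mono hg0)
    (show Ioc a b ⊆ Ici c from fun t ht => hca.trans ht.1.le).eventuallyLE

lemma sqrt_one_div_sub_one_div_le {x y : ℝ} (hy : 0 ≤ y) : √(1 / x - 1 / y) ≤ 1 / √x := by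
  rw [one_div √x, ← Real.sqrt_inv, ← one_div]
  exact Real.sqrt_le_sqrt (sub_le_self _ (by positivity))

lemma continuousOn_one_div_mul_log_pow (k : ℕ) :
    ContinuousOn (fun t => 1 / (t * log t ^ k)) (Ioi 1) := fun t ht => by
  have ht0 : 0 < t := by linarith [mem_Ioi.1 ht]
  have hlog : 0 < log t := Real.log_pos ht
  fun_prop (disch := positivity)

lemma integral_one_div_mul_log_pow_succ {n : ℕ} (hn : 0 < n) {a b : ℝ} (ha : 1 < a)
    (hab : a ≤ b) :
    ∫ t in a..b, 1 / (t * log t ^ (n + 1)) = 1 / (n * log a ^ n) - 1 / (n * log b ^ n) := by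
  have hderiv : ∀ t ∈ uIcc a b,
      HasDerivAt (fun t => -(n * log t ^ n)⁻¹) (1 / (t * log t ^ (n + 1))) t := by
    intro t ht
    rw [uIcc_of_le hab] at ht
    have ht0 : 0 < t := by linarith [ht.1]
    have hlog : 0 < log t := Real.log_pos (by linarith [ht.1])
    have hn0 : (0 : ℝ) < n := by exact_mod_cast hn
    have h : HasDerivAt (fun t => n * log t ^ n) (n * (n * log t ^ (n - 1) * t⁻¹)) t := by
      simpa using ((Real.hasDerivAt_log ht0.ne').pow n).const_mul (n : ℝ)
    refine (h.inv (mul_pos hn0 (pow_pos hlog n)).ne').neg.congr_deriv ?_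
    obtain ⟨k, rfl⟩ : ∃ k, n = k + 1 := ⟨n - 1, by omega⟩
    rw [Nat.add_sub_cancel]
    field_simp
    ring
  have hint : IntervalIntegrable (fun t => 1 / (t * log t ^ (n + 1))) volume a b :=
    ((continuousOn_one_div_mul_log_pow (n + 1)).mono fun t ht =>
      (by linarith [ht.1] : 1 < t)).intervalIntegrable_of_Icc hab
  rw [intervalIntegral.integral_eq_sub_of_hasDerivAt hderiv hint]
  simp only [one_div]
  ring

lemma sq_div_mul_log_eq {n : ℕ} (hn : 0 < n) (x : ℝ) {t : ℝ} (ht : 1 < t) :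
    (x / (t * log t)) ^ 2 = log t ^ (n - 1) / t * x ^ 2 * (1 / (t * log t ^ (n + 1))) := by
  have hlog : 0 < log t := Real.log_pos ht
  obtain ⟨k, rfl⟩ : ∃ k, n = k + 1 := ⟨n - 1, by omega⟩
  rw [Nat.add_sub_cancel]
  field_simp
  ring

theorem sqrt_sub_sqrt_le_of_abs_deriv_le {n : ℕ} (hn : 0 < n) {f f' ψ : ℝ → ℝ} {a b : ℝ}
    (ha : 1 < a) (hab : a ≤ b) (hf : ∀ t ∈ Icc a b, 0 ≤ f t)
    (hderiv : ∀ t ∈ Icc a b, HasDerivAt f (f' t) t)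
    (hbound : ∀ t ∈ Icc a b, |f' t| ≤ ψ t * √(f t) / (t * log t))
    (hint : IntegrableOn (fun t => log t ^ (n - 1) / t * ψ t ^ 2) (Icc a b)) :
    √(f b) - √(f a) ≤ √(∫ t in a..b, log t ^ (n - 1) / t * ψ t ^ 2) *
      √(1 / (n * log a ^ n) - 1 / (n * log b ^ n)) / 2 := by
  have hone : ∀ t ∈ Icc a b, 1 < t := fun t ht => ha.trans_le ht.1
  rw [← integral_one_div_mul_log_pow_succ hn ha hab]
  refine sqrt_sub_sqrt_le_sqrt_integral_mul_sqrt_integral hab hf hderiv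
    (fun t ht => (hbound t ht).trans_eq (div_mul_eq_mul_div ..).symm)
    (fun t ht => (sq_div_mul_log_eq hn (ψ t) (hone t ht)).le) (fun t ht => ?_) (fun t ht => ?_)
    hint (((continuousOn_one_div_mul_log_pow (n + 1)).mono hone).integrableOn_Icc)
  all_goals
    have := hone t ht
    have := Real.log_pos (hone t ht)
    positivity

theorem stmt_9_general (n : ℕ) (hn : 1 ≤ n) (f f' ψ : ℝ → ℝ) (ε : ℝ) (hε : 0 ≤ ε)
    (hf0 : ∀ t, 3 ≤ t → 0 ≤ f t)
    (hderiv : ∀ t, 3 ≤ t → HasDerivAt f (f' t) t)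
    (hbound : ∀ t, 3 ≤ t → |f' t| ≤ ψ t * Real.sqrt (f t) / (t * Real.log t))
    (hint : MeasureTheory.IntegrableOn
      (fun t => (Real.log t) ^ (n - 1) / t * (ψ t) ^ 2) (Set.Ici 3))
    (hintle : (∫ t in Set.Ici (3 : ℝ), (Real.log t) ^ (n - 1) / t * (ψ t) ^ 2) ≤ 4 * ε ^ 2) :
    ∀ a b : ℝ, 3 ≤ a → a ≤ b →
      Real.sqrt (f b) - Real.sqrt (f a) ≤
          2 * ε * Real.sqrt (1 / (n * (Real.log a) ^ n) - 1 / (n * (Real.log b) ^ n)) ∧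
        Real.sqrt (f b) - Real.sqrt (f a) ≤ 4 * ε / Real.sqrt (n * (Real.log a) ^ n) := by
  intro a b ha hab
  have hIcc : Icc a b ⊆ Ici 3 := fun t ht => ha.trans ht.1
  have hA : √(∫ t in a..b, log t ^ (n - 1) / t * ψ t ^ 2) ≤ 2 * ε := by
    refine Real.sqrt_le_iff.2 ⟨by positivity, ?_⟩
    refine (intervalIntegral_le_setIntegral_Ici ha hab hint fun t ht => ?_).trans (by linarith)
    have := Real.log_nonneg (by linarith [mem_Ici.1 ht] : (1 : ℝ) ≤ t)
    have : (0 : ℝ) ≤ t := by linarith [mem_Ici.1 ht]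
    positivity
  set J := 1 / (n * log a ^ n) - 1 / (n * log b ^ n)
  have hmain : √(f b) - √(f a) ≤ ε * √J := by
    refine (sqrt_sub_sqrt_le_of_abs_deriv_le hn (by linarith) hab (fun t ht => hf0 t (hIcc ht))
      (fun t ht => hderiv t (hIcc ht)) (fun t ht => hbound t (hIcc ht))
      (hint.mono_set hIcc)).trans ?_
    nlinarith [Real.sqrt_nonneg J]
  have hlog_b : 0 < log b := Real.log_pos (by linarith)
  refine ⟨hmain.trans (by nlinarith [Real.sqrt_nonneg J]), hmain.trans ?_⟩
  calc ε * √J ≤ ε * (1 / √(n * log a ^ n)) := by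
        gcongr
        exact sqrt_one_div_sub_one_div_le (by positivity)
    _ ≤ 4 * ε / √(n * log a ^ n) := by
        rw [mul_one_div]
        gcongr
        linarith

/-- Gronwall-type estimate (3.7) from the proof of Theorem 3.3 (iii). -/
theorem stmt_9 (n : ℕ) (hn : 1 ≤ n) (f f' ψ : ℝ → ℝ) (ε : ℝ) (hε : 0 ≤ ε)
    (hf0 : ∀ t, 3 ≤ t → 0 ≤ f t)
    (hψ0 : ∀ t, 3 ≤ t → 0 ≤ ψ t)
    (hderiv : ∀ t, 3 ≤ t → HasDerivAt f (f' t) t)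
    (hbound : ∀ t, 3 ≤ t → |f' t| ≤ ψ t * Real.sqrt (f t) / (t * Real.log t))
    (hint : MeasureTheory.IntegrableOn
      (fun t => (Real.log t) ^ (n - 1) / t * (ψ t) ^ 2) (Set.Ici 3))
    (hintle : (∫ t in Set.Ici (3 : ℝ), (Real.log t) ^ (n - 1) / t * (ψ t) ^ 2) ≤ 4 * ε ^ 2) :
    ∀ a b : ℝ, 3 ≤ a → a ≤ b →
      Real.sqrt (f b) - Real.sqrt (f a) ≤
          2 * ε * Real.sqrt (1 / (n * (Real.log a) ^ n) - 1 / (n * (Real.log b) ^ n)) ∧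
        Real.sqrt (f b) - Real.sqrt (f a) ≤ 4 * ε / Real.sqrt (n * (Real.log a) ^ n) :=
  stmt_9_general n hn f f' ψ ε hε hf0 hderiv hbound hint hintle
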